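/- For q > -1, p real, υ a positive integer and n a nonnegative integer with p > (υ+1)n + 1, one has ∫_0^∞ x^q (1+x)^{-(p+q)} 𝔐_n(p,q,υ;x) x^{υj} dx = 0 for all integers 0 ≤ j < n. -/

import Mathlib

open Finset MeasureTheory Real Filter

/-- Pochhammer symbol `(a)_k = a (a+1) ⋯ (a+k-1)` for a real `a`. -/
noncomputable def poch (a : ℝ) (k : ℕ) : ℝ := ∏ i ∈ Finset.range k, (a + i)

/-- Generalized binomial coefficient `C(a, j)` for real `a`. -/
noncomputable def rchoose (a : ℝ) (j : ℕ) : ℝ := (-1 : ℝ) ^ j * poch (-a) j / j.factorial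

/-- The finite orthogonal polynomials `M_n^{(p,q)}(x)`. -/
noncomputable def Mfin (p q : ℝ) (n : ℕ) (x : ℝ) : ℝ :=
  (-1 : ℝ) ^ n * n.factorial *
    ∑ j ∈ Finset.range (n + 1), rchoose (p - n - 1) j * rchoose (q + n) (n - j) * (-x) ^ j

/-- The first set of finite biorthogonal polynomials `M_n(p,q,υ;x)`. -/
noncomputable def Mbio (p q : ℝ) (υ n : ℕ) (x : ℝ) : ℝ :=
  (-1 : ℝ) ^ n * poch (q + 1) (υ * n) *
    ∑ j ∈ Finset.range (n + 1), (-1 : ℝ) ^ j * (n.choose j : ℝ) *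
      (poch (n + 1 - p) (υ * j) / poch (q + 1) (υ * j)) * (-x) ^ (υ * j)

/-- The second set of finite biorthogonal polynomials `𝔐_n(p,q,υ;x)`. -/
noncomputable def Mfrak (p q : ℝ) (υ n : ℕ) (x : ℝ) : ℝ :=
  ∑ r ∈ Finset.range (n + 1), ∑ s ∈ Finset.range (r + 1),
    (-1 : ℝ) ^ (s + n) * (r.choose s : ℝ) * (poch (p + q - n) r / r.factorial) *
      poch ((s + q + 1) / υ) n * x ^ r * (1 + x) ^ (n - r)

open Polynomial Set

lemma poch_succ (a : ℝ) (k : ℕ) : poch a (k+1) = poch a k * (a + k) := by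
  simp [poch, Finset.prod_range_succ]

lemma poch_add (a : ℝ) (k l : ℕ) : poch a (k + l) = poch a k * poch (a + k) l := by
  induction l with
  | zero => simp [poch]
  | succ l ih =>
      have : k + (l + 1) = (k + l) + 1 := by ring
      rw [this, poch_succ, ih, poch_succ]
      push_cast; ring

lemma poch_one_shift (c : ℝ) (m : ℕ) : poch c (m+1) = c * poch (c+1) m := by
  have := poch_add c 1 m
  rw [show 1 + m = m + 1 from by ring] at this
  simpa [poch, Finset.prod_range_one] using this

lemma poch_sum (c : ℝ) (m : ℕ) :
    ∑ t ∈ range (m+1), poch c t / t.factorial = poch (c+1) m / m.factorial := by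
  induction m with
  | zero => simp [poch]
  | succ m ih =>
      rw [Finset.sum_range_succ, ih]
      have hc' : poch c m * (c + m) = c * poch (c+1) m := by
        rw [← poch_succ, poch_one_shift]
      rw [poch_succ, poch_succ]
      have h1 : (m.factorial : ℝ) ≠ 0 := by positivity
      have h2 : ((m+1).factorial : ℝ) ≠ 0 := by positivity
      have h3 : ((m+1).factorial : ℝ) = (m+1) * m.factorial := by
        rw [Nat.factorial_succ]; push_cast; ring
      rw [hc', h3]
      field_simp
      ring

lemma alt_sum_poly (n : ℕ) (P : Polynomial ℝ) (hP : P.degree < n) :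
    ∑ s ∈ range (n+1), (-1:ℝ)^s * (n.choose s : ℝ) * P.eval (s : ℝ) = 0 := by
  induction n generalizing P with
  | zero =>
      have hbot : P.degree = ⊥ := Nat.WithBot.lt_zero_iff.mp (by simpa using hP)
      have : P = 0 := Polynomial.degree_eq_bot.mp hbot
      simp [this]
  | succ n ih =>
      set f : ℕ → ℝ := fun s => P.eval (s : ℝ) with hf
      set Q : Polynomial ℝ := P - P.comp (X + C 1) with hQdef
      have hQdeg : Q.degree < n := by
        by_cases hP0 : P = 0
        · have : Q = 0 := by simp [hQdef, hP0]
          rw [this, Polynomial.degree_zero]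
          exact bot_lt_iff_ne_bot.mpr (by simp)
        · have hc0 : P.comp (X + C 1) ≠ 0 := fun h => hP0 <| taylor_injective 1 <| by
            simpa [taylor_apply] using h
          have hndc : (P.comp (X + C 1)).natDegree = P.natDegree := by
            rw [← taylor_apply, natDegree_taylor]
          have hd : (P.comp (X + C 1)).degree = P.degree := by
            rw [Polynomial.degree_eq_natDegree hc0, Polynomial.degree_eq_natDegree hP0, hndc]
          have hl : (P.comp (X + C 1)).leadingCoeff = P.leadingCoeff := by
            rw [Polynomial.leadingCoeff_comp (by rw [Polynomial.natDegree_X_add_C]; norm_num)]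
            rw [Polynomial.leadingCoeff_X_add_C]
            simp
          have hlt := Polynomial.degree_sub_lt hd.symm hP0 hl.symm
          have hPle : P.degree ≤ (n : WithBot ℕ) := by
            rw [Polynomial.degree_eq_natDegree hP0] at hP ⊢
            have h' : P.natDegree < n+1 := by exact_mod_cast hP
            exact_mod_cast Nat.lt_succ_iff.mp h'
          exact lt_of_lt_of_le hlt hPle
      have key : ∀ s : ℕ, f s - f (s+1) = Q.eval (s:ℝ) := by
        intro s; simp [hf, hQdef, Polynomial.eval_comp]
      have pascal : ∀ i : ℕ, ((n+1).choose (i+1) : ℝ) = (n.choose i : ℝ) + (n.choose (i+1) : ℝ) := by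
        intro i; exact_mod_cast congrArg (Nat.cast (R := ℝ)) (Nat.choose_succ_succ n i)
      have hB : ∑ s ∈ range (n+1), (-1:ℝ)^s * (n.choose s : ℝ) * f s
          = (∑ i ∈ range (n+1), (-1:ℝ)^(i+1) * (n.choose (i+1) : ℝ) * f (i+1)) + f 0 := by
        have h2 : ∑ s ∈ range (n+2), (-1:ℝ)^s * (n.choose s : ℝ) * f s
            = ∑ s ∈ range (n+1), (-1:ℝ)^s * (n.choose s : ℝ) * f s := by
          rw [Finset.sum_range_succ, Nat.choose_succ_self]; simp
        rw [← h2, Finset.sum_range_succ' _ (n+1)]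
        simp
      have hA : ∑ s ∈ range (n+2), (-1:ℝ)^s * ((n+1).choose s : ℝ) * f s
          = (∑ i ∈ range (n+1), (-1:ℝ)^(i+1) * ((n+1).choose (i+1) : ℝ) * f (i+1)) + f 0 := by
        rw [Finset.sum_range_succ' _ (n+1)]
        simp
      have hAB : ∑ s ∈ range (n+2), (-1:ℝ)^s * ((n+1).choose s : ℝ) * f s
          = (∑ s ∈ range (n+1), (-1:ℝ)^s * (n.choose s : ℝ) * f s)
            - ∑ i ∈ range (n+1), (-1:ℝ)^i * (n.choose i : ℝ) * f (i+1) := by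
        rw [hA, hB]
        have hsplit : ∀ i ∈ range (n+1),
            (-1:ℝ)^(i+1) * ((n+1).choose (i+1) : ℝ) * f (i+1)
            = (-1:ℝ)^(i+1) * (n.choose (i+1) : ℝ) * f (i+1)
              - (-1:ℝ)^i * (n.choose i : ℝ) * f (i+1) := by
          intro i _; rw [pascal]; ring
        rw [Finset.sum_congr rfl hsplit, Finset.sum_sub_distrib]
        ring
      have final : ∑ s ∈ range (n+2), (-1:ℝ)^s * ((n+1).choose s : ℝ) * f s
          = ∑ s ∈ range (n+1), (-1:ℝ)^s * (n.choose s : ℝ) * Q.eval (s:ℝ) := by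
        rw [hAB, ← Finset.sum_sub_distrib]
        apply Finset.sum_congr rfl
        intro s _
        rw [← key s]; ring
      show ∑ s ∈ range (n+1+1), (-1:ℝ)^s * ((n+1).choose s : ℝ) * f s = 0
      rw [show n+1+1 = n+2 from rfl, final]
      exact ih Q hQdeg

lemma pochInnerSum (a : ℝ) (n s : ℕ) (hs : s ≤ n) (has : a + s ≠ 0) :
    ∑ r ∈ Ico s (n+1), (r.choose s : ℝ) * poch a r / r.factorial
      = poch a (n+1) / ((a+s) * s.factorial * (n-s).factorial) := by
  have hn1 : n + 1 - s = (n - s) + 1 := by omega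
  rw [Finset.sum_Ico_eq_sum_range, hn1]
  have step : ∀ t : ℕ, ((s+t).choose s : ℝ) * poch a (s+t) / (s+t).factorial
      = (poch a s / s.factorial) * (poch (a+s) t / t.factorial) := by
    intro t
    have hfacN : (s+t).choose s * s.factorial * t.factorial = (s+t).factorial := by
      rw [Nat.add_comm s t, mul_right_comm]
      exact Nat.add_choose_mul_factorial_mul_factorial t s
    have hfac : ((s+t).choose s : ℝ) * s.factorial * t.factorial = (s+t).factorial := by
      exact_mod_cast congrArg (Nat.cast (R := ℝ)) hfacN
    have h1 : (s.factorial : ℝ) ≠ 0 := by positivity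
    have h2 : (t.factorial : ℝ) ≠ 0 := by positivity
    have h3 : ((s+t).factorial : ℝ) ≠ 0 := by positivity
    rw [poch_add]
    field_simp
    linear_combination (poch a s * poch (a + (s:ℝ)) t) * hfac
  calc ∑ t ∈ range ((n-s)+1), ((s+t).choose s : ℝ) * poch a (s+t) / (s+t).factorial
      = ∑ t ∈ range ((n-s)+1), (poch a s / s.factorial) * (poch (a+s) t / t.factorial) := by
        exact Finset.sum_congr rfl fun t _ => step t
    _ = (poch a s / s.factorial) * (poch (a+s+1) (n-s) / (n-s).factorial) := by
        rw [← Finset.mul_sum, poch_sum]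
    _ = poch a (n+1) / ((a+s) * s.factorial * (n-s).factorial) := by
        have hkey : poch a (n+1) = poch a s * (a+s) * poch (a+s+1) (n-s) := by
          have h1 : n + 1 = (s+1) + (n-s) := by omega
          rw [h1, poch_add, poch_succ]
          have : a + ((s+1 : ℕ) : ℝ) = a + s + 1 := by push_cast; ring
          rw [this]
        rw [hkey]
        have h1 : (s.factorial : ℝ) ≠ 0 := by positivity
        have h2 : ((n-s).factorial : ℝ) ≠ 0 := by positivity
        field_simp

lemma keysum (q : ℝ) {υ n j : ℕ} (hυ : 0 < υ) (hj : j < n) (hq : -1 < q) :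
    ∑ r ∈ range (n+1), ∑ s ∈ range (r+1),
      (-1:ℝ)^(s+n) * (r.choose s : ℝ) * (poch (q + (υ*j : ℕ) + 1) r / r.factorial)
        * poch (((s:ℝ)+q+1)/υ) n = 0 := by
  set a : ℝ := q + (υ*j : ℕ) + 1 with ha
  have h0 : (0:ℝ) ≤ ((υ*j : ℕ) : ℝ) := Nat.cast_nonneg _
  have hapos : ∀ s : ℕ, 0 < a + s := by
    intro s
    have : (0:ℝ) ≤ (s:ℝ) := Nat.cast_nonneg _
    rw [ha]; linarith
  -- swap the order of summation
  have swap : ∑ r ∈ range (n+1), ∑ s ∈ range (r+1),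
      (-1:ℝ)^(s+n) * (r.choose s : ℝ) * (poch a r / r.factorial) * poch (((s:ℝ)+q+1)/υ) n
      = ∑ s ∈ range (n+1), ∑ r ∈ Ico s (n+1),
      (-1:ℝ)^(s+n) * (r.choose s : ℝ) * (poch a r / r.factorial) * poch (((s:ℝ)+q+1)/υ) n := by
    simp only [Finset.range_eq_Ico]
    exact (Finset.sum_Ico_Ico_comm 0 (n+1)
      (fun s r => (-1:ℝ)^(s+n) * (r.choose s : ℝ) * (poch a r / r.factorial) * poch (((s:ℝ)+q+1)/υ) n)).symm
  rw [swap]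
  -- the polynomial
  set P : Polynomial ℝ := ∏ i ∈ (Finset.range n).erase j, (Polynomial.X + Polynomial.C (q+1+(υ:ℝ)*i)) with hPdef
  have hPeval : ∀ s : ℕ, (a + s) * P.eval (s:ℝ) = ∏ i ∈ Finset.range n, ((s:ℝ)+q+1+(υ:ℝ)*i) := by
    intro s
    have hmem : j ∈ Finset.range n := Finset.mem_range.mpr hj
    have := Finset.mul_prod_erase (Finset.range n) (fun i => (s:ℝ)+q+1+(υ:ℝ)*i) hmem
    rw [← this]
    congr 1
    · rw [ha]; push_cast; ring
    · rw [hPdef, Polynomial.eval_prod]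
      apply Finset.prod_congr rfl
      intro i _
      simp only [Polynomial.eval_add, Polynomial.eval_X, Polynomial.eval_C]
      ring
  have hpoch_prod : ∀ s : ℕ, poch (((s:ℝ)+q+1)/υ) n
      = (∏ i ∈ Finset.range n, ((s:ℝ)+q+1+(υ:ℝ)*i)) / (υ:ℝ)^n := by
    intro s
    have hυ0 : (υ:ℝ) ≠ 0 := Nat.cast_ne_zero.mpr hυ.ne'
    rw [poch]
    have hcg : ∀ i ∈ Finset.range n, ((s:ℝ)+q+1)/υ + i = ((s:ℝ)+q+1+(υ:ℝ)*i)/(υ:ℝ) := by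
      intro i _; field_simp
    rw [Finset.prod_congr rfl hcg, Finset.prod_div_distrib, Finset.prod_const, Finset.card_range]
  -- degree bound
  have hn0 : 0 < n := Nat.pos_of_ne_zero (by omega)
  have hcard : ((Finset.range n).erase j).card = n - 1 := by
    rw [Finset.card_erase_of_mem (Finset.mem_range.mpr hj), Finset.card_range]
  have hdeg : P.degree < n := by
    rw [hPdef, Polynomial.degree_prod]
    have hone : ∀ i ∈ (Finset.range n).erase j,
        (Polynomial.X + Polynomial.C (q+1+(υ:ℝ)*i)).degree = 1 := fun i _ =>
      Polynomial.degree_X_add_C _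
    rw [Finset.sum_congr rfl hone, Finset.sum_const, hcard]
    rw [nsmul_eq_mul, mul_one]
    exact_mod_cast Nat.cast_lt.mpr (Nat.sub_lt hn0 one_pos)
  have hυ0 : ((υ:ℝ))^n ≠ 0 := by positivity
  have hfac : ∀ s : ℕ, s ≤ n → ((n.choose s : ℝ)) * s.factorial * (n-s).factorial = n.factorial := by
    intro s hs
    exact_mod_cast congrArg (Nat.cast (R := ℝ)) (Nat.choose_mul_factorial_mul_factorial hs)
  -- evaluate each outer term
  have main : ∀ s ∈ range (n+1), ∑ r ∈ Ico s (n+1),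
      (-1:ℝ)^(s+n) * (r.choose s : ℝ) * (poch a r / r.factorial) * poch (((s:ℝ)+q+1)/υ) n
      = ((-1:ℝ)^n * poch a (n+1) / ((υ:ℝ)^n * n.factorial))
          * ((-1:ℝ)^s * (n.choose s : ℝ) * P.eval (s:ℝ)) := by
    intro s hs
    have hsn : s ≤ n := Nat.lt_succ_iff.mp (Finset.mem_range.mp hs)
    have has : a + (s:ℝ) ≠ 0 := (hapos s).ne'
    have h1 : ∑ r ∈ Ico s (n+1),
        (-1:ℝ)^(s+n) * (r.choose s : ℝ) * (poch a r / r.factorial) * poch (((s:ℝ)+q+1)/υ) n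
        = ((-1:ℝ)^(s+n) * poch (((s:ℝ)+q+1)/υ) n)
          * ∑ r ∈ Ico s (n+1), (r.choose s : ℝ) * poch a r / r.factorial := by
      rw [Finset.mul_sum]
      exact Finset.sum_congr rfl fun r _ => by ring
    rw [h1, pochInnerSum a n s hsn has, hpoch_prod s, ← hPeval s]
    have hs1 : (s.factorial : ℝ) ≠ 0 := by positivity
    have hs2 : ((n-s).factorial : ℝ) ≠ 0 := by positivity
    have hs3 : (n.factorial : ℝ) ≠ 0 := by positivity
    have hsgn : (-1:ℝ)^(s+n) = (-1:ℝ)^s * (-1:ℝ)^n := by rw [pow_add]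
    have hcc := hfac s hsn
    have hcns : (n.choose s : ℝ) ≠ 0 := Nat.cast_ne_zero.mpr (Nat.choose_pos hsn).ne'
    rw [hsgn, ← hcc]
    field_simp
  rw [Finset.sum_congr rfl main, ← Finset.mul_sum,
    alt_sum_poly n P hdeg, mul_zero]

lemma poch_pos {c : ℝ} (hc : 0 < c) (k : ℕ) : 0 < poch c k := by
  apply Finset.prod_pos
  intro i _
  positivity

noncomputable def Kern (A B : ℝ) (x : ℝ) : ℝ := x ^ (A-1) * (1+x) ^ (-(A+B))

lemma Kern_contOn (A B : ℝ) : ContinuousOn (Kern A B) (Set.Ioi 0) := by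
  apply ContinuousOn.mul
  · intro x hx
    exact (Real.continuousAt_rpow_const x _ (Or.inl (ne_of_gt (mem_Ioi.mp hx)))).continuousWithinAt
  · intro x hx
    have h1 : (0:ℝ) < 1 + x := by have := mem_Ioi.mp hx; linarith
    exact (ContinuousAt.rpow_const (by fun_prop) (Or.inl h1.ne')).continuousWithinAt

lemma Kern_integrableOn {A B : ℝ} (hA : 0 < A) (hB : 0 < B) :
    IntegrableOn (Kern A B) (Set.Ioi 0) := by
  have hsplit : Set.Ioi (0:ℝ) = Set.Ioc 0 1 ∪ Set.Ioi 1 :=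
    (Set.Ioc_union_Ioi_eq_Ioi zero_le_one).symm
  rw [hsplit]
  apply MeasureTheory.IntegrableOn.union
  · -- on (0,1]
    have hmeas : AEStronglyMeasurable (Kern A B) (volume.restrict (Set.Ioc (0:ℝ) 1)) :=
      ((Kern_contOn A B).mono Set.Ioc_subset_Ioi_self).aestronglyMeasurable measurableSet_Ioc
    have hint : IntegrableOn (fun x : ℝ => x ^ (A-1)) (Set.Ioc (0:ℝ) 1) := by
      have := intervalIntegral.intervalIntegrable_rpow' (a := (0:ℝ)) (b := 1) (r := A - 1)
        (by linarith)
      rwa [intervalIntegrable_iff_integrableOn_Ioc_of_le zero_le_one] at this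
    apply hint.mono' hmeas
    filter_upwards [ae_restrict_mem measurableSet_Ioc] with x hx
    obtain ⟨hx0, _⟩ := hx
    have h1x : (1:ℝ) ≤ 1 + x := by linarith
    simp only [Kern]
    rw [Real.norm_eq_abs, abs_of_nonneg
      (mul_nonneg (Real.rpow_nonneg hx0.le _) (Real.rpow_nonneg (by linarith) _))]
    have hle : (1+x) ^ (-(A+B)) ≤ 1 :=
      Real.rpow_le_one_of_one_le_of_nonpos h1x (by linarith)
    calc x ^ (A-1) * (1+x) ^ (-(A+B)) ≤ x ^ (A-1) * 1 := by
          apply mul_le_mul_of_nonneg_left hle (by positivity)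
      _ = x ^ (A-1) := mul_one _
  · -- on (1,∞)
    have hmeas : AEStronglyMeasurable (Kern A B) (volume.restrict (Set.Ioi (1:ℝ))) :=
      ((Kern_contOn A B).mono (Set.Ioi_subset_Ioi zero_le_one)).aestronglyMeasurable
        measurableSet_Ioi
    have hint : IntegrableOn (fun x : ℝ => x ^ (-(1+B))) (Set.Ioi (1:ℝ)) :=
      integrableOn_Ioi_rpow_of_lt (by linarith) one_pos
    apply hint.mono' hmeas
    filter_upwards [ae_restrict_mem measurableSet_Ioi] with x hx
    have hx1 : (1:ℝ) < x := mem_Ioi.mp hx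
    have hx0 : (0:ℝ) < x := by linarith
    simp only [Kern]
    rw [Real.norm_eq_abs, abs_of_nonneg
      (mul_nonneg (Real.rpow_nonneg hx0.le _) (Real.rpow_nonneg (by linarith) _))]
    have hle : (1+x) ^ (-(A+B)) ≤ x ^ (-(A+B)) :=
      Real.rpow_le_rpow_of_nonpos hx0 (by linarith) (by linarith)
    calc x ^ (A-1) * (1+x) ^ (-(A+B)) ≤ x ^ (A-1) * x ^ (-(A+B)) :=
          mul_le_mul_of_nonneg_left hle (by positivity)
      _ = x ^ (-(1+B)) := by rw [← Real.rpow_add hx0]; ring_nf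

lemma Kern_step {A B : ℝ} (hA : 0 < A) (hB : 0 < B) :
    (A+B) * ∫ x in Set.Ioi (0:ℝ), Kern (A+1) B x = A * ∫ x in Set.Ioi (0:ℝ), Kern A B x := by
  set F : ℝ → ℝ := fun x => x ^ A * (1+x) ^ (-(A+B)) with hF
  have hderiv : ∀ x ∈ Set.Ioi (0:ℝ), HasDerivAt F
      (A * Kern A B x - (A+B) * Kern (A+1) B x) x := by
    intro x hx
    have hx0 : (0:ℝ) < x := mem_Ioi.mp hx
    have h1x : (0:ℝ) < 1 + x := by linarith
    have h1 : HasDerivAt (fun y : ℝ => y ^ A) (A * x ^ (A-1)) x :=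
      Real.hasDerivAt_rpow_const (Or.inl hx0.ne')
    have h2 : HasDerivAt (fun y : ℝ => (1+y) ^ (-(A+B)))
        ((1:ℝ) * (-(A+B)) * (1+x) ^ (-(A+B)-1)) x := by
      simpa using HasDerivAt.rpow_const (p := -(A+B)) ((hasDerivAt_id x).const_add 1)
        (Or.inl h1x.ne')
    have := h1.mul h2
    refine this.congr_deriv ?_
    have e1 : Kern A B x = x ^ (A-1) * (1+x) ^ (-(A+B)) := rfl
    have e2 : Kern (A+1) B x = x ^ A * (1+x) ^ (-(A+B)-1) := by
      unfold Kern
      congr 2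
      · ring
      · ring
    rw [e1, e2]
    ring
  have hcont : ContinuousWithinAt F (Set.Ici (0:ℝ)) 0 := by
    apply ContinuousWithinAt.mul
    · exact (Real.continuousAt_rpow_const 0 A (Or.inr hA.le)).continuousWithinAt
    · exact (ContinuousAt.rpow_const (by fun_prop) (Or.inl (by norm_num))).continuousWithinAt
  have htend : Tendsto F atTop (nhds 0) := by
    have hub : ∀ᶠ x in atTop, F x ≤ x ^ (-B) := by
      filter_upwards [eventually_gt_atTop (0:ℝ)] with x hx0
      have hle : (1+x) ^ (-(A+B)) ≤ x ^ (-(A+B)) :=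
        Real.rpow_le_rpow_of_nonpos hx0 (by linarith) (by linarith)
      calc F x ≤ x ^ A * x ^ (-(A+B)) := mul_le_mul_of_nonneg_left hle (by positivity)
        _ = x ^ (-B) := by rw [← Real.rpow_add hx0]; ring_nf
    have hlb : ∀ᶠ x in atTop, 0 ≤ F x := by
      filter_upwards [eventually_gt_atTop (0:ℝ)] with x hx0
      have h1x : (0:ℝ) < 1 + x := by linarith
      positivity
    exact tendsto_of_tendsto_of_tendsto_of_le_of_le' tendsto_const_nhds
      (tendsto_rpow_neg_atTop hB) hlb hub
  have hint1 := Kern_integrableOn hA hB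
  have hint2 := Kern_integrableOn (by linarith : (0:ℝ) < A + 1) hB
  have f'int : IntegrableOn (fun x => A * Kern A B x - (A+B) * Kern (A+1) B x)
      (Set.Ioi (0:ℝ)) := (hint1.const_mul A).sub (hint2.const_mul (A+B))
  have hFTC := MeasureTheory.integral_Ioi_of_hasDerivAt_of_tendsto hcont hderiv f'int htend
  have hF0 : F 0 = 0 := by
    simp only [hF]
    rw [Real.zero_rpow hA.ne']
    ring
  rw [hF0, sub_zero] at hFTC
  rw [MeasureTheory.integral_sub (hint1.const_mul A) (hint2.const_mul (A+B)),
    MeasureTheory.integral_const_mul, MeasureTheory.integral_const_mul] at hFTC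
  linarith [hFTC]

lemma Kern_int_shift {A B : ℝ} (hA : 0 < A) (hB : 0 < B) (r : ℕ) :
    ∫ x in Set.Ioi (0:ℝ), Kern (A + r) B x
      = poch A r / poch (A+B) r * ∫ x in Set.Ioi (0:ℝ), Kern A B x := by
  induction r with
  | zero => simp [poch]
  | succ r ih =>
      have hAr : 0 < A + r := by positivity
      have hstep := Kern_step (A := A + r) hAr hB
      have hcast : A + ((r+1 : ℕ) : ℝ) = (A + r) + 1 := by push_cast; ring
      have hne : (0:ℝ) < A + r + B := by positivity
      have hpne : poch (A+B) r ≠ 0 := (poch_pos (by positivity) r).ne'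
      have hpne2 : poch (A+B) (r+1) ≠ 0 := (poch_pos (by positivity) (r+1)).ne'
      rw [hcast]
      have : ∫ x in Set.Ioi (0:ℝ), Kern ((A + r) + 1) B x
          = (A + r) / (A + r + B) * ∫ x in Set.Ioi (0:ℝ), Kern (A + r) B x := by
        field_simp
        linarith [hstep]
      rw [this, ih, poch_succ, poch_succ]
      field_simp
      ring

theorem Mfrak_moment_vanishing (p q : ℝ) (υ n j : ℕ) (hυ : 0 < υ) (hq : q > -1)
    (hp : p > ((υ : ℝ) + 1) * n + 1) (hj : j < n) :
    ∫ x in Set.Ioi (0 : ℝ),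
        x ^ q * (1 + x) ^ (-(p + q)) * Mfrak p q υ n x * x ^ (υ * j) = 0 := by
  classical
  set a0 : ℝ := q + (υ*j : ℕ) + 1 with ha0def
  set b : ℝ := p - n - (υ*j : ℕ) - 1 with hbdef
  have hc0 : (0:ℝ) ≤ ((υ*j:ℕ):ℝ) := Nat.cast_nonneg _
  have ha0 : 0 < a0 := by rw [ha0def]; linarith
  have hυ1 : (1:ℝ) ≤ (υ:ℝ) := by exact_mod_cast hυ
  have hυjn : ((υ*j:ℕ):ℝ) + υ ≤ (υ:ℝ) * n := by
    have hN : υ*j + υ ≤ υ*n := by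
      calc υ*j + υ = υ*(j+1) := by ring
        _ ≤ υ*n := Nat.mul_le_mul_left υ (Nat.succ_le_of_lt hj)
    exact_mod_cast hN
  have hb : 0 < b := by rw [hbdef]; nlinarith
  have hab : a0 + b = p + q - n := by rw [ha0def, hbdef]; ring
  -- the coefficient
  set c : ℕ → ℕ → ℝ := fun r s => (-1 : ℝ) ^ (s + n) * (r.choose s : ℝ) *
      (poch (p + q - n) r / r.factorial) * poch (((s:ℝ) + q + 1) / υ) n with hcdef
  have hcongr : Set.EqOn
      (fun x : ℝ => x ^ q * (1 + x) ^ (-(p + q)) * Mfrak p q υ n x * x ^ (υ * j))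
      (fun x : ℝ => ∑ r ∈ Finset.range (n+1),
        (∑ s ∈ Finset.range (r+1), c r s) * Kern (a0 + r) b x)
      (Set.Ioi (0:ℝ)) := by
    intro x hx
    have hx0 : (0:ℝ) < x := Set.mem_Ioi.mp hx
    have h1x : (0:ℝ) < 1 + x := by linarith
    simp only [Mfrak, hcdef]
    rw [Finset.mul_sum, Finset.sum_mul]
    apply Finset.sum_congr rfl
    intro r hr
    have hrn : r ≤ n := Nat.lt_succ_iff.mp (Finset.mem_range.mp hr)
    have hK : (x ^ q * (1+x) ^ (-(p+q))) * ((x:ℝ) ^ r * (1+x) ^ (n-r)) * x ^ (υ*j)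
        = Kern (a0 + r) b x := by
      have e1 : x ^ q * x ^ ((r:ℕ):ℝ) * x ^ (((υ*j:ℕ)):ℝ) = x ^ (a0 + r - 1) := by
        rw [← Real.rpow_add hx0, ← Real.rpow_add hx0]
        congr 1
        rw [ha0def]; push_cast; ring
      have e2 : (1+x) ^ (-(p+q)) * (1+x) ^ (((n-r:ℕ)):ℝ) = (1+x) ^ (-(a0 + (r:ℝ) + b)) := by
        rw [← Real.rpow_add h1x]
        congr 1
        rw [ha0def, hbdef]
        push_cast [Nat.cast_sub hrn]
        ring
      calc (x ^ q * (1+x) ^ (-(p+q))) * ((x:ℝ) ^ r * (1+x) ^ (n-r)) * x ^ (υ*j)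
          = (x ^ q * x ^ ((r:ℕ):ℝ) * x ^ (((υ*j:ℕ)):ℝ))
            * ((1+x) ^ (-(p+q)) * (1+x) ^ (((n-r:ℕ)):ℝ)) := by
            rw [Real.rpow_natCast x r, Real.rpow_natCast (1+x) (n-r), Real.rpow_natCast x (υ*j)]
            ring
        _ = x ^ (a0 + r - 1) * (1+x) ^ (-(a0 + (r:ℝ) + b)) := by rw [e1, e2]
        _ = Kern (a0 + r) b x := by rw [Kern]
      -- done
    calc x ^ q * (1 + x) ^ (-(p + q)) *
          (∑ s ∈ Finset.range (r+1), (-1:ℝ)^(s+n) * (r.choose s : ℝ)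
            * (poch (p+q-(n:ℝ)) r / r.factorial) * poch (((s:ℝ)+q+1)/υ) n
              * x ^ r * (1+x) ^ (n-r)) * x ^ (υ*j)
        = (∑ s ∈ Finset.range (r+1), (-1:ℝ)^(s+n) * (r.choose s : ℝ)
            * (poch (p+q-(n:ℝ)) r / r.factorial) * poch (((s:ℝ)+q+1)/υ) n)
          * ((x ^ q * (1+x) ^ (-(p+q))) * ((x:ℝ) ^ r * (1+x) ^ (n-r)) * x ^ (υ*j)) := by
          rw [Finset.mul_sum, Finset.sum_mul, Finset.sum_mul]
          apply Finset.sum_congr rfl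
          intro s _
          ring
      _ = (∑ s ∈ Finset.range (r+1), (-1:ℝ)^(s+n) * (r.choose s : ℝ)
            * (poch (p+q-(n:ℝ)) r / r.factorial) * poch (((s:ℝ)+q+1)/υ) n)
          * Kern (a0 + r) b x := by rw [hK]
  rw [MeasureTheory.setIntegral_congr_fun measurableSet_Ioi hcongr]
  have hint : ∀ r ∈ Finset.range (n+1),
      IntegrableOn (fun x => (∑ s ∈ Finset.range (r+1), c r s) * Kern (a0 + r) b x)
        (Set.Ioi (0:ℝ)) := by
    intro r _
    exact (Kern_integrableOn (by positivity) hb).const_mul _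
  rw [MeasureTheory.integral_finset_sum _ hint]
  have hterm : ∀ r ∈ Finset.range (n+1),
      ∫ x in Set.Ioi (0:ℝ), (∑ s ∈ Finset.range (r+1), c r s) * Kern (a0 + r) b x
      = (∑ s ∈ Finset.range (r+1), (-1:ℝ)^(s+n) * (r.choose s : ℝ)
          * (poch a0 r / r.factorial) * poch (((s:ℝ)+q+1)/υ) n)
        * ∫ x in Set.Ioi (0:ℝ), Kern a0 b x := by
    intro r _
    rw [MeasureTheory.integral_const_mul, Kern_int_shift ha0 hb r]
    have hpne : poch (a0+b) r ≠ 0 := (poch_pos (by linarith) r).ne'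
    rw [Finset.sum_mul, Finset.sum_mul]
    apply Finset.sum_congr rfl
    intro s _
    simp only [hcdef, ← hab]
    have hfr : (r.factorial : ℝ) ≠ 0 := by positivity
    field_simp
  rw [Finset.sum_congr rfl hterm, ← Finset.sum_mul]
  have hzero := keysum q hυ hj hq
  rw [ha0def]
  rw [hzero, zero_mul]
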